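/- Let (S, ⊑) be a cpo, let H be a nonzero finite-dimensional complex Hilbert space, and let (Pᵢ, fᵢ)_{i≥1} be a monotone S-labeled sequence of partitions of H. Then for every s₀ ∈ S and all indices i ≤ j, one has ⨆{ q ∈ Pⱼ : fⱼ(q) ⊑ s₀ } ≤ ⨆{ p ∈ Pᵢ : fᵢ(p) ⊑ s₀ } in the lattice of closed subspaces of H. -/

import Mathlib

variable {H : Type*} [NormedAddCommGroup H] [InnerProductSpace ℂ H]

/-- Two subspaces of a complex inner product space are orthogonal when every vector of
one is orthogonal to every vector of the other. -/
def Orth (p q : Submodule ℂ H) : Prop :=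
  ∀ x ∈ p, ∀ y ∈ q, @inner ℂ H _ x y = 0

/-- A partition of `H` is a set of nonzero closed subspaces of `H` that are pairwise
orthogonal and whose supremum in the complete lattice of closed subspaces of `H`
(i.e. the topological closure of the submodule supremum) is all of `H`. -/
def IsPartition (P : Set (Submodule ℂ H)) : Prop :=
  (∀ p ∈ P, p ≠ ⊥) ∧
  (∀ p ∈ P, IsClosed (p : Set H)) ∧
  (∀ p ∈ P, ∀ q ∈ P, p ≠ q → Orth p q) ∧
  (sSup P).topologicalClosure = ⊤

/-- `P₁` refines `P₂` when every cell of `P₁` is contained in some cell of `P₂`. -/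
def Refines (P₁ P₂ : Set (Submodule ℂ H)) : Prop :=
  ∀ p ∈ P₁, ∃ q ∈ P₂, p ≤ q

/-- A multicell of a partition `P` is the supremum (in the lattice of closed subspaces)
of a possibly empty subset of `P`. -/
def IsMulticell (P : Set (Submodule ℂ H)) (m : Submodule ℂ H) : Prop :=
  ∃ C ⊆ P, m = (sSup C).topologicalClosure

variable {S : Type*} [PartialOrder S]

/-- A monotone `S`-labeled sequence of partitions of `H`: a sequence `P i` of partitions
together with labelings `f i` of their cells such that for `i ≤ j` and non-orthogonal cells
`p ∈ P i`, `q ∈ P j` one has `f i p ⊑ f j q`. -/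
def MonotoneLabeled (P : ℕ → Set (Submodule ℂ H)) (f : ℕ → Submodule ℂ H → S) : Prop :=
  ∀ i j : ℕ, i ≤ j → ∀ p ∈ P i, ∀ q ∈ P j, ¬ Orth p q → f i p ≤ f j q

/-- A partition `Pinf` is the eventual supremum of the sequence `P` if, for all sufficiently
large `n`, `Pinf` is the least upper bound of `{P i : i ≥ n}` in the refinement order. -/
def IsEventualSup (P : ℕ → Set (Submodule ℂ H)) (Pinf : Set (Submodule ℂ H)) : Prop :=
  ∃ N : ℕ, ∀ n, N ≤ n →
    (∀ i, n ≤ i → Refines (P i) Pinf) ∧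
      ∀ Q : Set (Submodule ℂ H), IsPartition Q →
        (∀ i, n ≤ i → Refines (P i) Q) → Refines Pinf Q

/-! By monotonicity of the labelling, every cell of `P i` whose label is not `≤ s₀` is orthogonal
to every cell of `P j` whose label is `≤ s₀`. Since `P i` is an orthogonal decomposition of the
finite-dimensional space `H`, the orthogonal complement of the span of those cells of `P i` is
exactly the span of its cells labelled `≤ s₀`. -/

open Submodule

theorem orth_iff_isOrtho {p q : Submodule ℂ H} : Orth p q ↔ p ⟂ q :=
  isOrtho_iff_inner_eq.symm

theorem Submodule.orthogonal_eq_of_isOrtho_of_sup_eq_top {𝕜 E : Type*} [RCLike 𝕜]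
    [NormedAddCommGroup E] [InnerProductSpace 𝕜 E] {A B : Submodule 𝕜 E}
    (hAB : A ⟂ B) (hsup : A ⊔ B = ⊤) : Bᗮ = A := by
  simpa only [hsup, top_inf_eq, inf_orthogonal_eq_bot, sup_bot_eq] using
    sup_inf_assoc_of_le B hAB

theorem IsPartition.sSup_eq_top [FiniteDimensional ℂ H] {P : Set (Submodule ℂ H)}
    (hP : IsPartition P) : sSup P = ⊤ := by
  simpa only [(sSup P).closed_of_finiteDimensional.submodule_topologicalClosure_eq] using
    hP.2.2.2

theorem orthogonal_sSup_sep_not {P : Set (Submodule ℂ H)} (hP : P.Pairwise Orth)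
    (htop : sSup P = ⊤) (φ : Submodule ℂ H → Prop) :
    (sSup {p ∈ P | ¬ φ p})ᗮ = sSup {p ∈ P | φ p} := by
  refine orthogonal_eq_of_isOrtho_of_sup_eq_top ?_ ?_
  · refine isOrtho_sSup_left.2 fun p ⟨hp, hφp⟩ ↦ isOrtho_sSup_right.2 fun q ⟨hq, hφq⟩ ↦ ?_
    exact orth_iff_isOrtho.1 (hP hp hq fun hpq ↦ hφq (hpq ▸ hφp))
  · rw [← sSup_union, ← Set.sep_or]
    simpa only [em, Set.sep_true] using htop

theorem MonotoneLabeled.orth_of_not_le {P : ℕ → Set (Submodule ℂ H)}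
    {f : ℕ → Submodule ℂ H → S} (hf : MonotoneLabeled P f) {i j : ℕ} (hij : i ≤ j)
    {p q : Submodule ℂ H} (hp : p ∈ P i) (hq : q ∈ P j) {s₀ : S} (hfp : ¬ f i p ≤ s₀)
    (hfq : f j q ≤ s₀) : Orth p q :=
  by_contra fun hpq ↦ hfp ((hf i j hij p hp q hq hpq).trans hfq)

theorem labeled_sup_antitone_general
    [FiniteDimensional ℂ H]
    (P : ℕ → Set (Submodule ℂ H)) (hP : ∀ i, IsPartition (P i))
    (f : ℕ → Submodule ℂ H → S) (hf : MonotoneLabeled P f)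
    (s₀ : S) (i j : ℕ) (hij : i ≤ j) :
    (sSup {q ∈ P j | f j q ≤ s₀}).topologicalClosure ≤
      (sSup {p ∈ P i | f i p ≤ s₀}).topologicalClosure := by
  refine topologicalClosure_mono (sSup_le fun q ⟨hq, hfq⟩ ↦ ?_)
  have hqbad : q ⟂ sSup {p ∈ P i | ¬ f i p ≤ s₀} := isOrtho_sSup_right.2 fun p ⟨hp, hfp⟩ ↦
    (orth_iff_isOrtho.1 (hf.orth_of_not_le hij hp hq hfp hfq)).symm
  calc q ≤ (sSup {p ∈ P i | ¬ f i p ≤ s₀})ᗮ := hqbad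
    _ = sSup {p ∈ P i | f i p ≤ s₀} :=
      orthogonal_sSup_sep_not (hP i).2.2.1 (hP i).sSup_eq_top _

/-- Let `S` be a cpo, `H` a nonzero finite-dimensional complex Hilbert
space, and `(P i, f i)` a monotone `S`-labeled sequence of partitions of `H`.  Then for every
`s₀ ∈ S` and indices `i ≤ j`, `⨆ {q ∈ P j | f j q ⊑ s₀} ≤ ⨆ {p ∈ P i | f i p ⊑ s₀}` in the
lattice of closed subspaces of `H`. -/
theorem labeled_sup_antitone
    (hcpo : ∀ g : ℕ → S, Monotone g → ∃ s, IsLUB (Set.range g) s)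
    [FiniteDimensional ℂ H] [Nontrivial H]
    (P : ℕ → Set (Submodule ℂ H)) (hP : ∀ i, IsPartition (P i))
    (f : ℕ → Submodule ℂ H → S) (hf : MonotoneLabeled P f)
    (s₀ : S) (i j : ℕ) (hij : i ≤ j) :
    (sSup {q ∈ P j | f j q ≤ s₀}).topologicalClosure ≤
      (sSup {p ∈ P i | f i p ≤ s₀}).topologicalClosure :=
  labeled_sup_antitone_general P hP f hf s₀ i j hij
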